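/- Let α ∈ (0,1), n ≥ 2, and let a_0, …, a_n be independent real-valued random variables with P(a_i > 0) = α and P(a_i < 0) = 1 − α for every i. For every integer k ≥ 0, the conditional probabilities satisfy the decoupled second-order recursions u_{k,n} = α(1−α)·(u_{k−2,n−2} − u_{k,n−2}) + u_{k,n−1} and v_{k,n} = α(1−α)·(v_{k−2,n−2} − v_{k,n−2}) + v_{k,n−1}. -/

import Mathlib

open MeasureTheory ProbabilityTheory

/-- Number of sign changes of the sequence `a 0, a 1, …, a N` (there are `N`
consecutive pairs): the number of indices `0 ≤ i ≤ N - 1` with `a i * a (i+1) < 0`. -/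
noncomputable def signChanges {Ω : Type*} (a : ℕ → Ω → ℝ) (N : ℕ) (ω : Ω) : ℕ :=
  ((Finset.range N).filter fun i => a i ω * a (i + 1) ω < 0).card

/-- `u k N`: the conditional probability, given `a N > 0`, that `(a 0, …, a N)`
has exactly `k` sign changes. -/
noncomputable def condProbPos {Ω : Type*} [MeasurableSpace Ω] (μ : Measure Ω)
    (a : ℕ → Ω → ℝ) (k N : ℕ) : ℝ :=
  ((μ[|{ω | 0 < a N ω}]) {ω | signChanges a N ω = k}).toReal

/-- `v k N`: the conditional probability, given `a N < 0`, that `(a 0, …, a N)`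
has exactly `k` sign changes. -/
noncomputable def condProbNeg {Ω : Type*} [MeasurableSpace Ω] (μ : Measure Ω)
    (a : ℕ → Ω → ℝ) (k N : ℕ) : ℝ :=
  ((μ[|{ω | a N ω < 0}]) {ω | signChanges a N ω = k}).toReal

/-! Conditioning on the sign of `a N`, which is almost surely nonzero, and using that `a (N + 1)`
is independent of `a 0, …, a N`, gives the coupled first-order recursions
`u_{k,N+1} = α u_{k,N} + (1 - α) v_{k-1,N}` and `v_{k,N+1} = (1 - α) v_{k,N} + α u_{k-1,N}`.
Eliminating `v` between two consecutive steps yields the decoupled recursion for `u`, and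
symmetrically for `v`. The recursion for `v` is that for `u` applied to `-a`, which swaps the
roles of `α` and `1 - α`. -/

section SignChanges

variable {Ω : Type*} {a : ℕ → Ω → ℝ}

lemma signChanges_succ (N : ℕ) (ω : Ω) :
    signChanges a (N + 1) ω =
      signChanges a N ω + if a N ω * a (N + 1) ω < 0 then 1 else 0 := by
  unfold signChanges
  rw [Finset.range_add_one, Finset.filter_insert]
  split_ifs <;> simp [Finset.card_insert_of_notMem]

lemma signChanges_neg : signChanges (-a) = signChanges a := by
  funext N ω
  simp [signChanges]

lemma measurable_signChanges {m : MeasurableSpace Ω} {N : ℕ}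
    (h : ∀ i ≤ N, Measurable (a i)) : Measurable (signChanges a N) := by
  induction N with
  | zero => exact (measurable_const : Measurable fun _ : Ω => 0)
  | succ N ih =>
    rw [funext (signChanges_succ N)]
    exact (ih fun i hi => h i (by omega)).add <| Measurable.ite
      (measurableSet_lt ((h N (by omega)).mul (h (N + 1) le_rfl)) measurable_const)
      measurable_const measurable_const

end SignChanges

section Probability

variable {Ω : Type*} [MeasurableSpace Ω] {μ : Measure Ω} {a : ℕ → Ω → ℝ}

lemma ae_ne_zero_of_measure_pos_add_measure_neg [IsProbabilityMeasure μ] {f : Ω → ℝ}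
    (hf : Measurable f) (h : μ {ω | 0 < f ω} + μ {ω | f ω < 0} = 1) :
    ∀ᵐ ω ∂μ, f ω ≠ 0 := by
  have hsplit : {ω | f ω ≠ 0} = {ω | 0 < f ω} ∪ {ω | f ω < 0} := by
    ext ω
    exact ne_iff_lt_or_gt.trans or_comm
  have hdisj : Disjoint {ω | 0 < f ω} {ω | f ω < 0} :=
    Set.disjoint_left.2 fun _ h₁ h₂ => lt_asymm (α := ℝ) h₁ h₂
  have hpos : MeasurableSet {ω | 0 < f ω} := measurableSet_lt measurable_const hf
  have hneg : MeasurableSet {ω | f ω < 0} := measurableSet_lt hf measurable_const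
  rw [ae_iff_measure_eq (hsplit ▸ hpos.union hneg).nullMeasurableSet, hsplit,
    measure_union hdisj hneg, h, measure_univ]

lemma indep_natural_comap_succ {n N : ℕ} (hN : N < n) (hsm : ∀ i, StronglyMeasurable (a i))
    (hindep : iIndepFun (fun i : Fin (n + 1) => a i) μ) :
    Indep (Filtration.natural a hsm N) (MeasurableSpace.comap (a (N + 1)) inferInstance) μ := by
  have h := indep_iSup_of_disjoint
    (m := fun i : Fin (n + 1) => MeasurableSpace.comap (a i) inferInstance)
    (fun i => (hsm i).measurable.comap_le) hindep.iIndep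
    (S := {i : Fin (n + 1) | (i : ℕ) ≤ N}) (T := {⟨N + 1, by omega⟩})
    (Set.disjoint_singleton_right.2 fun h => by simp at h)
  refine indep_of_indep_of_le_right (indep_of_indep_of_le_left h ?_) ?_
  · exact iSup₂_le fun i hi => le_iSup₂_of_le (⟨i, by omega⟩ : Fin (n + 1)) hi le_rfl
  · exact le_iSup₂_of_le (⟨N + 1, by omega⟩ : Fin (n + 1)) rfl le_rfl

lemma cond_signChanges_succ_pos [IsFiniteMeasure μ] {n N : ℕ} (hN : N < n)
    (hmeas : ∀ i, Measurable (a i)) (hindep : iIndepFun (fun i : Fin (n + 1) => a i) μ)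
    (h0 : ∀ᵐ ω ∂μ, a N ω ≠ 0) (hnext : μ {ω | 0 < a (N + 1) ω} ≠ 0) (k : ℕ) :
    μ[{ω | signChanges a (N + 1) ω = k} | {ω | 0 < a (N + 1) ω}] =
      μ[{ω | signChanges a N ω = k} | {ω | 0 < a N ω}] * μ {ω | 0 < a N ω} +
        μ[{ω | signChanges a N ω + 1 = k} | {ω | a N ω < 0}] * μ {ω | a N ω < 0} := by
  have hsm : ∀ i, StronglyMeasurable (a i) := fun i => (hmeas i).stronglyMeasurable
  have hmeas_past : ∀ i ≤ N, Measurable[Filtration.natural a hsm N] (a i) := fun i hi =>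
    ((Filtration.stronglyAdapted_natural hsm i).mono
      ((Filtration.natural a hsm).mono hi)).measurable
  have hS := measurable_signChanges hmeas_past
  set A := {ω | 0 < a N ω} ∩ {ω | signChanges a N ω = k}
  set B := {ω | a N ω < 0} ∩ {ω | signChanges a N ω + 1 = k}
  have hA : MeasurableSet[Filtration.natural a hsm N] A :=
    (measurableSet_lt measurable_const (hmeas_past N le_rfl)).inter (hS (measurableSet_singleton k))
  have hB : MeasurableSet[Filtration.natural a hsm N] B :=
    (measurableSet_lt (hmeas_past N le_rfl) measurable_const).inter
      ((hS.add_const 1) (measurableSet_singleton k))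
  have hP : MeasurableSet[MeasurableSpace.comap (a (N + 1)) inferInstance]
      {ω | 0 < a (N + 1) ω} := ⟨Set.Ioi 0, measurableSet_Ioi, rfl⟩
  have hAB : Disjoint A B :=
    Set.disjoint_left.2 fun _ hA hB => lt_asymm (α := ℝ) hA.1 hB.1
  have hae : ({ω | 0 < a (N + 1) ω} ∩ {ω | signChanges a (N + 1) ω = k} : Set Ω) =ᵐ[μ]
      ((A ∪ B) ∩ {ω | 0 < a (N + 1) ω} : Set Ω) := by
    refine Filter.eventuallyEq_set.2 (h0.mono fun ω hω => ?_)
    simp only [A, B, Set.mem_inter_iff, Set.mem_union, Set.mem_ofPred_eq, signChanges_succ]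
    by_cases hpos : 0 < a (N + 1) ω
    · rcases hω.lt_or_gt with h | h
      · simp [h, h.not_gt, mul_neg_of_neg_of_pos h hpos, hpos]
      · simp [h, h.not_gt, (mul_pos h hpos).not_gt, hpos]
    · simp [hpos]
  rw [cond_apply (measurableSet_lt measurable_const (hmeas (N + 1))), measure_congr hae,
    (Indep_iff _ _ μ).1 (indep_natural_comap_succ hN hsm hindep) _ _ (hA.union hB) hP,
    mul_comm, ENNReal.mul_inv_cancel_right hnext (measure_ne_top _ _),
    measure_union hAB (Filtration.le _ N _ hB),
    cond_mul_eq_inter (measurableSet_lt measurable_const (hmeas N)),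
    cond_mul_eq_inter (measurableSet_lt (hmeas N) measurable_const)]

lemma condProbPos_succ [IsFiniteMeasure μ] {n N : ℕ} (hN : N < n)
    (hmeas : ∀ i, Measurable (a i)) (hindep : iIndepFun (fun i : Fin (n + 1) => a i) μ)
    (h0 : ∀ᵐ ω ∂μ, a N ω ≠ 0) {α β : ℝ} (hα : 0 ≤ α) (hβ : 0 ≤ β)
    (hpos : μ {ω | 0 < a N ω} = ENNReal.ofReal α) (hneg : μ {ω | a N ω < 0} = ENNReal.ofReal β)
    (hnext : μ {ω | 0 < a (N + 1) ω} ≠ 0) (k : ℕ) :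
    condProbPos μ a k (N + 1) =
      α * condProbPos μ a k N + β * (if k = 0 then 0 else condProbNeg μ a (k - 1) N) := by
  have hshift : {ω | signChanges a N ω + 1 = k} =
      if k = 0 then ∅ else {ω | signChanges a N ω = k - 1} := by
    rcases k with _ | k <;> simp
  rw [condProbPos, cond_signChanges_succ_pos hN hmeas hindep h0 hnext,
    hpos, hneg, hshift, ENNReal.toReal_add (by finiteness) (by finiteness),
    ENNReal.toReal_mul, ENNReal.toReal_mul, ENNReal.toReal_ofReal hα, ENNReal.toReal_ofReal hβ]
  split_ifs <;> simp [condProbPos, condProbNeg, mul_comm]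

lemma condProbPos_neg (μ : Measure Ω) (a : ℕ → Ω → ℝ) :
    condProbPos μ (-a) = condProbNeg μ a := by
  funext k N
  simp [condProbPos, condProbNeg, signChanges_neg]

lemma condProbNeg_neg (μ : Measure Ω) (a : ℕ → Ω → ℝ) :
    condProbNeg μ (-a) = condProbPos μ a := by
  rw [← condProbPos_neg, neg_neg]

lemma condProbNeg_succ [IsFiniteMeasure μ] {n N : ℕ} (hN : N < n)
    (hmeas : ∀ i, Measurable (a i)) (hindep : iIndepFun (fun i : Fin (n + 1) => a i) μ)
    (h0 : ∀ᵐ ω ∂μ, a N ω ≠ 0) {α β : ℝ} (hα : 0 ≤ α) (hβ : 0 ≤ β)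
    (hpos : μ {ω | 0 < a N ω} = ENNReal.ofReal α) (hneg : μ {ω | a N ω < 0} = ENNReal.ofReal β)
    (hnext : μ {ω | a (N + 1) ω < 0} ≠ 0) (k : ℕ) :
    condProbNeg μ a k (N + 1) =
      β * condProbNeg μ a k N + α * (if k = 0 then 0 else condProbPos μ a (k - 1) N) := by
  simpa [condProbPos_neg, condProbNeg_neg, hpos, hneg, hnext] using
    condProbPos_succ (a := -a) hN (fun i => (hmeas i).neg)
      (hindep.comp (fun _ => Neg.neg) fun _ => measurable_neg)
      (by simpa using h0) hβ hα (by simpa using hneg) (by simpa using hpos) (by simpa using hnext) k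

end Probability

lemma decoupled_of_coupled_recursion {α β : ℝ} (hαβ : α + β = 1) {u₀ u₁ u₂ v₀ v₁ : ℕ → ℝ}
    (hu₁ : ∀ k, u₁ k = α * u₀ k + β * (if k = 0 then 0 else v₀ (k - 1)))
    (hv₁ : ∀ k, v₁ k = β * v₀ k + α * (if k = 0 then 0 else u₀ (k - 1)))
    (hu₂ : ∀ k, u₂ k = α * u₁ k + β * (if k = 0 then 0 else v₁ (k - 1))) (k : ℕ) :
    u₂ k = α * β * ((if k < 2 then 0 else u₀ (k - 2)) - u₀ k) + u₁ k := by
  obtain rfl : β = 1 - α := eq_sub_of_add_eq' hαβ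
  rcases k with _ | _ | k <;> simp [hu₂, hu₁, hv₁] <;> ring

/-- Decoupled second-order recursions for the conditional sign-change
probabilities: `u_{k,n} = α(1−α)·(u_{k−2,n−2} − u_{k,n−2}) + u_{k,n−1}` and
`v_{k,n} = α(1−α)·(v_{k−2,n−2} − v_{k,n−2}) + v_{k,n−1}`
(with the convention `u_{j,·} = v_{j,·} = 0` for `j < 0`). -/
theorem condProb_signChanges_decoupled_recursion
    {Ω : Type*} [MeasurableSpace Ω] (μ : Measure Ω) [IsProbabilityMeasure μ]
    (n : ℕ) (hn : 2 ≤ n) (α : ℝ) (hα : α ∈ Set.Ioo (0 : ℝ) 1) (a : ℕ → Ω → ℝ)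
    (hmeas : ∀ i, Measurable (a i))
    (hindep : iIndepFun
      (fun i : Fin (n + 1) => a i) μ)
    (hpos : ∀ i ≤ n, μ {ω | 0 < a i ω} = ENNReal.ofReal α)
    (hneg : ∀ i ≤ n, μ {ω | a i ω < 0} = ENNReal.ofReal (1 - α)) :
    ∀ k : ℕ,
      condProbPos μ a k n =
        α * (1 - α) * ((if k < 2 then 0 else condProbPos μ a (k - 2) (n - 2)) -
          condProbPos μ a k (n - 2)) + condProbPos μ a k (n - 1) ∧
      condProbNeg μ a k n =
        α * (1 - α) * ((if k < 2 then 0 else condProbNeg μ a (k - 2) (n - 2)) -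
          condProbNeg μ a k (n - 2)) + condProbNeg μ a k (n - 1) := by
  obtain ⟨hα₀, hα₁⟩ := hα
  have hβ₀ : 0 ≤ 1 - α := sub_nonneg.2 hα₁.le
  obtain ⟨m, rfl⟩ : ∃ m, n = m + 2 := ⟨n - 2, by omega⟩
  have h0 : ∀ i ≤ m + 2, ∀ᵐ ω ∂μ, a i ω ≠ 0 := fun i hi =>
    ae_ne_zero_of_measure_pos_add_measure_neg (hmeas i) <| by
      rw [hpos i hi, hneg i hi, ← ENNReal.ofReal_add hα₀.le hβ₀, add_sub_cancel, ENNReal.ofReal_one]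
  have hu : ∀ N < m + 2, ∀ k, condProbPos μ a k (N + 1) =
      α * condProbPos μ a k N + (1 - α) * (if k = 0 then 0 else condProbNeg μ a (k - 1) N) :=
    fun N hN => condProbPos_succ hN hmeas hindep (h0 N hN.le) hα₀.le hβ₀ (hpos N hN.le)
      (hneg N hN.le) (by simp [hpos (N + 1) hN, hα₀])
  have hv : ∀ N < m + 2, ∀ k, condProbNeg μ a k (N + 1) =
      (1 - α) * condProbNeg μ a k N + α * (if k = 0 then 0 else condProbPos μ a (k - 1) N) :=
    fun N hN => condProbNeg_succ hN hmeas hindep (h0 N hN.le) hα₀.le hβ₀ (hpos N hN.le)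
      (hneg N hN.le) (by simp [hneg (N + 1) hN, hα₁])
  intro k
  rw [show m + 2 - 1 = m + 1 from rfl, Nat.add_sub_cancel]
  have hu₂ := decoupled_of_coupled_recursion (add_sub_cancel α 1)
    (v₀ := fun k => condProbNeg μ a k m) (v₁ := fun k => condProbNeg μ a k (m + 1))
    (hu m (by omega)) (hv m (by omega)) (hu (m + 1) (by omega)) k
  have hv₂ := decoupled_of_coupled_recursion (sub_add_cancel 1 α)
    (v₀ := fun k => condProbPos μ a k m) (v₁ := fun k => condProbPos μ a k (m + 1))
    (hv m (by omega)) (hu m (by omega)) (hv (m + 1) (by omega)) k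
  rw [mul_comm (1 - α)] at hv₂
  exact ⟨hu₂, hv₂⟩
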